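/- For every integer j ≥ 1, there exists a permutation a₁, …, a_m of {1, …, m} with m = 8j + 2 such that every position i ≡ 1 (mod 4) has weight 13j + 3 and every position i ≡ 3 (mod 4) has weight 9j + 2. -/

import Mathlib

/-!
Fill positions `1, …, 8j` in blocks of four: block `k < 2j` (positions `4k+1, …, 4k+4`) receives

* `8j+1-2k, 5j+2+k, 4j-1-2k, k+1` when `k < j`,
* `10j+2-2k, 3j+1+k, 6j-2k, k+1` when `j ≤ k`,

and the last two positions receive `5j+1, 6j+2`. The last entry `k+1` of a block, followed by the
first two entries of the next block, sums to `13j+3`, and preceded by the second and third entries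
of its own block to `9j+2`, in both regimes. In each column the two regimes interleave or abut:
the last entries give `[1, 2j]`, the third ones `(2j, 4j]` (odd, then even numbers), the second
ones `(4j, 6j+1] \ {5j+1}` and the first ones `(6j+2, 8j+2]`, so with the tail every number is
used exactly once.
-/

/-- Weight of position `i` (1-based) in a sequence of length `m` given by `a`:
the sum of `a i` and its existing neighbors. -/
def seqWeight (m : Nat) (a : Nat → Nat) (i : Nat) : Nat :=
  (if 2 ≤ i then a (i-1) else 0) + a i + (if i + 1 ≤ m then a (i+1) else 0)

lemma seqWeight_one {m : ℕ} (a : ℕ → ℕ) (hm : 2 ≤ m) : seqWeight m a 1 = a 1 + a 2 := by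
  simp [seqWeight, hm]

lemma seqWeight_succ {m i : ℕ} (a : ℕ → ℕ) (hi : 1 ≤ i) (him : i + 2 ≤ m) :
    seqWeight m a (i + 1) = a i + a (i + 1) + a (i + 2) := by
  simp [seqWeight, hi, show i + 1 + 1 ≤ m by omega]

def blockEntry (j k : ℕ) : ℕ → ℕ
  | 0 => if k < j then 8*j + 1 - 2*k else 10*j + 2 - 2*k
  | 1 => if k < j then 5*j + 2 + k else 3*j + 1 + k
  | 2 => if k < j then 4*j - 1 - 2*k else 6*j - 2*k
  | _ => k + 1

def arrangement (j i : ℕ) : ℕ :=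
  if i ≤ 8*j then blockEntry j ((i - 1) / 4) ((i - 1) % 4)
  else if i = 8*j + 1 then 5*j + 1 else 6*j + 2

section

variable {j k : ℕ}

lemma blockEntry_cases (r : ℕ) (hr : r < 4) :
    (r = 0 ∧ k < j ∧ blockEntry j k r = 8*j + 1 - 2*k) ∨
    (r = 0 ∧ j ≤ k ∧ blockEntry j k r = 10*j + 2 - 2*k) ∨
    (r = 1 ∧ k < j ∧ blockEntry j k r = 5*j + 2 + k) ∨
    (r = 1 ∧ j ≤ k ∧ blockEntry j k r = 3*j + 1 + k) ∨
    (r = 2 ∧ k < j ∧ blockEntry j k r = 4*j - 1 - 2*k) ∨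
    (r = 2 ∧ j ≤ k ∧ blockEntry j k r = 6*j - 2*k) ∨
    (r = 3 ∧ blockEntry j k r = k + 1) := by
  rcases lt_or_ge k j with hk | hk <;> interval_cases r <;> simp [blockEntry, hk, hk.not_gt]

lemma blockEntry_bounds {r : ℕ} (hk : k < 2*j) (hr : r < 4) :
    1 ≤ blockEntry j k r ∧ blockEntry j k r ≤ 8*j + 2 ∧
      blockEntry j k r ≠ 5*j + 1 ∧ blockEntry j k r ≠ 6*j + 2 := by
  have := blockEntry_cases (j := j) (k := k) r hr
  omega

lemma blockEntry_inj {k' r r' : ℕ} (hk : k < 2*j) (hr : r < 4) (hk' : k' < 2*j) (hr' : r' < 4)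
    (h : blockEntry j k r = blockEntry j k' r') : k = k' ∧ r = r' := by
  have := blockEntry_cases (j := j) (k := k) r hr
  have := blockEntry_cases (j := j) (k := k') r' hr'
  omega

lemma blockEntry_three : blockEntry j k 3 = k + 1 := rfl

lemma blockEntry_zero_add_one (hk : k < 2*j) :
    blockEntry j k 0 + blockEntry j k 1 + k = 13*j + 3 := by
  simp only [blockEntry]; split_ifs <;> omega

lemma blockEntry_one_add_two_add_three (hk : k < 2*j) :
    blockEntry j k 1 + blockEntry j k 2 + blockEntry j k 3 = 9*j + 2 := by
  simp only [blockEntry]; split_ifs <;> omega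

lemma arrangement_block {r : ℕ} (hk : k < 2*j) (hr : r < 4) :
    arrangement j (4*k + r + 1) = blockEntry j k r := by
  rw [arrangement, if_pos (by omega)]
  congr 1 <;> omega

lemma arrangement_eight_mul_add_one : arrangement j (8*j + 1) = 5*j + 1 := by
  simp [arrangement]

lemma arrangement_eight_mul_add_two : arrangement j (8*j + 2) = 6*j + 2 := by
  simp [arrangement]

lemma arrangement_cases {i : ℕ} (h1 : 1 ≤ i) (h2 : i ≤ 8*j + 2) :
    (i = 8*j + 1 ∧ arrangement j i = 5*j + 1) ∨ (i = 8*j + 2 ∧ arrangement j i = 6*j + 2) ∨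
    ∃ k r, k < 2*j ∧ r < 4 ∧ i = 4*k + r + 1 ∧ arrangement j i = blockEntry j k r := by
  rcases (by omega : i = 8*j + 1 ∨ i = 8*j + 2 ∨ i ≤ 8*j) with rfl | rfl | hi
  · exact .inl ⟨rfl, arrangement_eight_mul_add_one⟩
  · exact .inr (.inl ⟨rfl, arrangement_eight_mul_add_two⟩)
  · obtain ⟨k, r, hk, hr, rfl⟩ : ∃ k r, k < 2*j ∧ r < 4 ∧ i = 4*k + r + 1 :=
      ⟨(i - 1) / 4, (i - 1) % 4, by omega, by omega, by omega⟩
    exact .inr (.inr ⟨k, r, hk, hr, rfl, arrangement_block hk hr⟩)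

lemma seqWeight_arrangement_block_start (hk : k < 2*j) :
    seqWeight (8*j + 2) (arrangement j) (4*k + 1) = 13*j + 3 := by
  have h0 : arrangement j (4*k + 1) = blockEntry j k 0 :=
    arrangement_block (r := 0) hk (by norm_num)
  have h1 : arrangement j (4*k + 2) = blockEntry j k 1 :=
    arrangement_block (r := 1) hk (by norm_num)
  have hsum := blockEntry_zero_add_one hk
  rcases k with _ | k
  · rw [seqWeight_one _ (by omega)]
    simp_all
  · have hprev : arrangement j (4*(k + 1)) = k + 1 :=
      arrangement_block (r := 3) (by omega) (by norm_num)
    rw [seqWeight_succ _ (by omega) (by omega), hprev, h0, h1]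
    omega

lemma seqWeight_arrangement_block_third (hk : k < 2*j) :
    seqWeight (8*j + 2) (arrangement j) (4*k + 2 + 1) = 9*j + 2 := by
  have h1 : arrangement j (4*k + 2) = blockEntry j k 1 :=
    arrangement_block (r := 1) hk (by norm_num)
  have h2 : arrangement j (4*k + 2 + 1) = blockEntry j k 2 :=
    arrangement_block (r := 2) hk (by norm_num)
  have h3 : arrangement j (4*k + 2 + 2) = blockEntry j k 3 :=
    arrangement_block (r := 3) hk (by norm_num)
  rw [seqWeight_succ _ (by omega) (by omega), h1, h2, h3]
  exact blockEntry_one_add_two_add_three hk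

lemma seqWeight_arrangement_eight_mul_add_one :
    seqWeight (8*j + 2) (arrangement j) (8*j + 1) = 13*j + 3 := by
  rcases j with _ | j
  · rw [seqWeight_one _ (by omega)]
    simp [arrangement]
  · have hprev := arrangement_block (j := j + 1) (k := 2*j + 1) (r := 3) (by omega) (by norm_num)
    rw [show 4*(2*j + 1) + 3 + 1 = 8*(j + 1) by ring, blockEntry_three] at hprev
    rw [seqWeight_succ _ (by omega) (by omega), hprev, arrangement_eight_mul_add_one,
      arrangement_eight_mul_add_two]
    ring

end

theorem arrangement_bijOn (j : ℕ) :
    Set.BijOn (arrangement j) (Set.Icc 1 (8*j + 2)) (Set.Icc 1 (8*j + 2)) := by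
  have hmaps : Set.MapsTo (arrangement j) (Set.Icc 1 (8*j + 2)) (Set.Icc 1 (8*j + 2)) := by
    rintro i ⟨h1, h2⟩
    rcases arrangement_cases h1 h2 with ⟨-, h⟩ | ⟨-, h⟩ | ⟨k, r, hk, hr, -, h⟩
    · exact ⟨by omega, by omega⟩
    · exact ⟨by omega, by omega⟩
    · have := blockEntry_bounds hk hr
      exact ⟨by omega, by omega⟩
  have hinj : Set.InjOn (arrangement j) (Set.Icc 1 (8*j + 2)) := by
    rintro i ⟨h1, h2⟩ i' ⟨h1', h2'⟩ h
    rcases arrangement_cases h1 h2 with ⟨rfl, hv⟩ | ⟨rfl, hv⟩ | ⟨k, r, hk, hr, rfl, hv⟩ <;>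
    rcases arrangement_cases h1' h2' with ⟨rfl, hv'⟩ | ⟨rfl, hv'⟩ | ⟨k', r', hk', hr', rfl, hv'⟩
    all_goals first
      | omega
      | have := blockEntry_bounds hk hr; omega
      | have := blockEntry_bounds hk' hr'; omega
      | have := blockEntry_inj hk hr hk' hr' (hv.symm.trans (h.trans hv')); omega
  exact ((Set.finite_Icc _ _).injOn_iff_bijOn_of_mapsTo hmaps).mp hinj

theorem stmt18 :
    ∀ j : ℕ, 1 ≤ j →
    ∃ a : ℕ → ℕ, Set.BijOn a (Set.Icc 1 (8*j + 2)) (Set.Icc 1 (8*j + 2)) ∧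
      (∀ i, 1 ≤ i → i ≤ 8*j + 2 → i % 4 = 1 → seqWeight (8*j + 2) a i = 13*j + 3) ∧
      (∀ i, 1 ≤ i → i ≤ 8*j + 2 → i % 4 = 3 → seqWeight (8*j + 2) a i = 9*j + 2) := by
  intro j _
  refine ⟨arrangement j, arrangement_bijOn j, ?_, ?_⟩
  · intro i _ hi hi4
    obtain rfl | ⟨k, hk, rfl⟩ : i = 8*j + 1 ∨ ∃ k < 2*j, i = 4*k + 1 := by
      rcases (by omega : i = 8*j + 1 ∨ i ≤ 8*j) with h | h
      · exact .inl h
      · exact .inr ⟨i / 4, by omega, by omega⟩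
    · exact seqWeight_arrangement_eight_mul_add_one
    · exact seqWeight_arrangement_block_start hk
  · intro i _ hi hi4
    obtain ⟨k, hk, rfl⟩ : ∃ k < 2*j, i = 4*k + 2 + 1 := ⟨i / 4, by omega, by omega⟩
    exact seqWeight_arrangement_block_third hk
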